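/- arXiv:2308.04359 — 3 statements merged into one kernel-verified Lean document; each statement's English description precedes it below -/
import Mathlib

section
/- Let b, s, ε, d be real numbers with 0 ≤ b < 1, 0 ≤ ε, 0 ≤ d, s = 1 − ε d², and 0 ≤ s < 1 (so ε d² ≤ 1). Then ((s − b)/(1 − b s))² ≥ 1 − 4 ε d² / (1 − b). In particular, if moreover b < 1 − d²/e^{2c} for some c > 0 (so that 1/(1 − b) < e^{2c}/d²), then ((s − b)/(1 − b s))² ≥ 1 − 4 e^{2c} ε. -/
/-- lower bound `((s − b)/(1 − b s))² ≥ 1 − 4 ε d²/(1 − b)` for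
`s = 1 − ε d²`, and the consequence when `b < 1 − d²/e^{2c}`. -/
theorem mobius_sq_lower_bound (b s ε d : ℝ) (hb0 : 0 ≤ b) (hb1 : b < 1)
    (hε : 0 ≤ ε) (hd : 0 ≤ d) (hs : s = 1 - ε * d ^ 2) (hs0 : 0 ≤ s) (hs1 : s < 1) :
    ((s - b) / (1 - b * s)) ^ 2 ≥ 1 - 4 * ε * d ^ 2 / (1 - b) ∧
    (∀ c : ℝ, 0 < c → b < 1 - d ^ 2 / Real.exp (2 * c) →
      ((s - b) / (1 - b * s)) ^ 2 ≥ 1 - 4 * Real.exp (2 * c) * ε) := by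
  have h1b : (0:ℝ) < 1 - b := by linarith
  have hD : (0:ℝ) < 1 - b * s := by nlinarith
  have ht0 : 0 ≤ ε * d ^ 2 := by positivity
  have ht1 : ε * d ^ 2 ≤ 1 := by nlinarith
  have hmain : ((s - b) / (1 - b * s)) ^ 2 ≥ 1 - 4 * ε * d ^ 2 / (1 - b) := by
    rw [div_pow, ge_iff_le, sub_le_iff_le_add, ← sub_le_iff_le_add',
      one_sub_div (by positivity : (1 - b*s)^2 ≠ 0),
      div_le_div_iff₀ (by positivity) h1b]
    set t := ε * d ^ 2 with htdef
    have hbt : 0 ≤ b * t := mul_nonneg hb0 ht0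
    have key2 : (2 - t) * (1 + b) * (1 - b) ^ 2 ≤ 4 * (1 - b + b * t) ^ 2 := by
      nlinarith [sq_nonneg (1 - b), mul_nonneg (sq_nonneg (1 - b)) hbt,
        mul_nonneg (sq_nonneg (1 - b)) ht0, mul_nonneg (mul_nonneg hb0 hbt) ht0,
        mul_nonneg h1b.le hbt]
    have key3 := mul_le_mul_of_nonneg_left key2 ht0
    have hseq : s = 1 - t := hs
    subst hseq
    nlinarith [key3]
  refine ⟨hmain, fun c hc hbc => ?_⟩
  have he : (0:ℝ) < Real.exp (2 * c) := Real.exp_pos _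
  have hd2 : d ^ 2 < (1 - b) * Real.exp (2 * c) := by
    have := (div_lt_iff₀ he).mp (by linarith : d ^ 2 / Real.exp (2 * c) < 1 - b)
    linarith
  have : 4 * ε * d ^ 2 / (1 - b) ≤ 4 * Real.exp (2 * c) * ε := by
    rw [div_le_iff₀ h1b]
    nlinarith
  linarith
end

section
/- Let h be a norm on ℂⁿ with open unit ball D = { z : h(z) < 1 }, and let F : D → D be a biholomorphic automorphism of D with h(F(0)) = a. Then for every z ∈ D, h(F(z)) ≤ (h(z) + a)/(1 + a·h(z)). -/
open Metric

/-!
Composing `F` with a norm-one functional `φ` that attains `‖F z‖` at `F z` gives a holomorphic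
map `ψ = φ ∘ F` from the unit ball to the unit disc with `|ψ z| = ‖F z‖` and `|ψ 0| ≤ ‖F 0‖`.
Following `ψ` by the disc automorphism sending `ψ 0` to `0`, the Schwarz lemma bounds the
pseudo-hyperbolic distance between `ψ z` and `ψ 0` by `‖z‖`; that distance is at least
`(|ψ z| - |ψ 0|) / (1 - |ψ 0| |ψ z|)`, which rearranges to the claimed bound.
-/

open scoped ComplexConjugate

namespace Complex

noncomputable def mobius (b w : ℂ) : ℂ := (w - b) / (1 - conj b * w)

@[simp]
theorem mobius_self (b : ℂ) : mobius b b = 0 := by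
  simp [mobius]

theorem norm_one_sub_conj_mul_sq_sub_norm_sub_sq (b w : ℂ) :
    ‖1 - conj b * w‖ ^ 2 - ‖w - b‖ ^ 2 = (1 - ‖b‖ ^ 2) * (1 - ‖w‖ ^ 2) := by
  simp only [← normSq_eq_norm_sq, normSq_apply, sub_re, sub_im, mul_re, mul_im, conj_re,
    conj_im, one_re, one_im]
  ring

theorem one_sub_norm_mul_norm_le_norm_one_sub_conj_mul (b w : ℂ) :
    1 - ‖b‖ * ‖w‖ ≤ ‖1 - conj b * w‖ := by
  simpa using norm_sub_norm_le (1 : ℂ) (conj b * w)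

variable {b w : ℂ}

theorem one_sub_conj_mul_ne_zero (hb : ‖b‖ < 1) (hw : ‖w‖ ≤ 1) : 1 - conj b * w ≠ 0 := by
  refine norm_pos_iff.mp (lt_of_lt_of_le ?_ (one_sub_norm_mul_norm_le_norm_one_sub_conj_mul b w))
  nlinarith [norm_nonneg b]

theorem norm_mobius_lt_one (hb : ‖b‖ < 1) (hw : ‖w‖ < 1) : ‖mobius b w‖ < 1 := by
  have hden := norm_pos_iff.mpr (one_sub_conj_mul_ne_zero hb hw.le)
  rw [mobius, norm_div, div_lt_one hden, ← sq_lt_sq₀ (norm_nonneg _) hden.le, ← sub_pos,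
    norm_one_sub_conj_mul_sq_sub_norm_sub_sq]
  exact mul_pos (by nlinarith [norm_nonneg b]) (by nlinarith [norm_nonneg w])

theorem differentiableOn_mobius (hb : ‖b‖ < 1) : DifferentiableOn ℂ (mobius b) (ball 0 1) :=
  fun w hw ↦ DifferentiableAt.differentiableWithinAt (f := fun w ↦ (w - b) / (1 - conj b * w))
    (.div (by fun_prop) (by fun_prop) (one_sub_conj_mul_ne_zero hb (mem_ball_zero_iff.mp hw).le))

/-- The pseudo-hyperbolic distance between `b` and `w` dominates that between their moduli. -/
theorem norm_sub_norm_le_norm_mobius_mul (hb : ‖b‖ < 1) (hw : ‖w‖ < 1) :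
    ‖w‖ - ‖b‖ ≤ ‖mobius b w‖ * (1 - ‖b‖ * ‖w‖) := by
  have hA := one_sub_norm_mul_norm_le_norm_one_sub_conj_mul b w
  have hbw : 0 < 1 - ‖b‖ * ‖w‖ := by nlinarith [norm_nonneg b, norm_nonneg w]
  have hmA : ‖mobius b w‖ * ‖1 - conj b * w‖ = ‖w - b‖ := by
    rw [mobius, norm_div, div_mul_cancel₀ _ (hbw.trans_le hA).ne']
  set m := ‖mobius b w‖
  set A := ‖1 - conj b * w‖
  have hident : A ^ 2 * (1 - m ^ 2) = (1 - ‖b‖ ^ 2) * (1 - ‖w‖ ^ 2) := by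
    rw [← norm_one_sub_conj_mul_sq_sub_norm_sub_sq, ← hmA]
    ring
  have hm : m ^ 2 ≤ 1 := by nlinarith [norm_mobius_lt_one hb hw, norm_nonneg (mobius b w)]
  -- `(‖w‖ - ‖b‖)² = (1 - ‖b‖‖w‖)² - (1 - ‖b‖²)(1 - ‖w‖²)`
  have hsq : (‖w‖ - ‖b‖) ^ 2 ≤ (m * (1 - ‖b‖ * ‖w‖)) ^ 2 := by
    nlinarith [mul_le_mul_of_nonneg_right (pow_le_pow_left₀ hbw.le hA 2) (sub_nonneg.mpr hm)]
  exact le_of_sq_le_sq hsq (mul_nonneg (norm_nonneg _) hbw.le)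

end Complex

open Complex

section SchwarzPick

variable {E : Type*} [NormedAddCommGroup E] [NormedSpace ℂ E]

theorem norm_mobius_le_norm_of_mapsTo_ball {f : E → ℂ} (hd : DifferentiableOn ℂ f (ball 0 1))
    (h_maps : Set.MapsTo f (ball 0 1) (ball 0 1)) {z : E} (hz : ‖z‖ < 1) :
    ‖mobius (f 0) (f z)‖ ≤ ‖z‖ := by
  have hf0 : ‖f 0‖ < 1 := mem_ball_zero_iff.mp (h_maps (mem_ball_self one_pos))
  refine Complex.norm_le_norm_of_mapsTo_ball ((differentiableOn_mobius hf0).comp hd h_maps)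
    (fun w hw ↦ ?_) (mobius_self _) hz
  exact mem_closedBall_zero_iff.mpr
    (norm_mobius_lt_one hf0 (mem_ball_zero_iff.mp (h_maps hw))).le

theorem norm_mul_one_add_le_of_mapsTo_ball {f : E → ℂ} (hd : DifferentiableOn ℂ f (ball 0 1))
    (h_maps : Set.MapsTo f (ball 0 1) (ball 0 1)) {z : E} (hz : ‖z‖ < 1) :
    ‖f z‖ * (1 + ‖f 0‖ * ‖z‖) ≤ ‖z‖ + ‖f 0‖ := by
  have hf0 : ‖f 0‖ < 1 := mem_ball_zero_iff.mp (h_maps (mem_ball_self one_pos))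
  have hfz : ‖f z‖ < 1 := mem_ball_zero_iff.mp (h_maps (mem_ball_zero_iff.mpr hz))
  have hbw : 0 ≤ 1 - ‖f 0‖ * ‖f z‖ := by nlinarith [norm_nonneg (f 0), norm_nonneg (f z)]
  have := (norm_sub_norm_le_norm_mobius_mul hf0 hfz).trans
    (mul_le_mul_of_nonneg_right (norm_mobius_le_norm_of_mapsTo_ball hd h_maps hz) hbw)
  linarith

variable {E' : Type*} [NormedAddCommGroup E'] [NormedSpace ℂ E']

theorem norm_le_div_of_mapsTo_ball {F : E → E'} (hd : DifferentiableOn ℂ F (ball 0 1))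
    (h_maps : Set.MapsTo F (ball 0 1) (ball 0 1)) {z : E} (hz : ‖z‖ < 1) :
    ‖F z‖ ≤ (‖z‖ + ‖F 0‖) / (1 + ‖F 0‖ * ‖z‖) := by
  obtain ⟨φ, hφ, hφz⟩ := exists_dual_vector'' ℂ (F z)
  have hψ_maps : Set.MapsTo (φ ∘ F) (ball 0 1) (ball 0 1) := fun w hw ↦
    mem_ball_zero_iff.mpr <| (φ.le_of_opNorm_le hφ _).trans_lt <| by
      simpa using mem_ball_zero_iff.mp (h_maps hw)
  have hψ := norm_mul_one_add_le_of_mapsTo_ball (φ.differentiable.comp_differentiableOn hd)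
    hψ_maps hz
  have hψz : ‖φ (F z)‖ = ‖F z‖ := by simp [hφz]
  have hψ0 : ‖φ (F 0)‖ ≤ ‖F 0‖ := by simpa using φ.le_of_opNorm_le hφ (F 0)
  have hFz : ‖F z‖ < 1 := mem_ball_zero_iff.mp (h_maps (mem_ball_zero_iff.mpr hz))
  simp only [Function.comp_apply, hψz] at hψ
  rw [le_div_iff₀ (by positivity)]
  -- the bound `(r + t) / (1 + t r)` is increasing in `t` for `r ≤ 1`
  nlinarith [mul_nonneg (sub_nonneg.mpr hψ0) (sub_nonneg.mpr
    (mul_le_one₀ hFz.le (norm_nonneg z) hz.le))]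

end SchwarzPick

theorem automorphism_schwarz_pick_bound_general
    {E : Type*} [NormedAddCommGroup E] [NormedSpace ℂ E]
    (F : E → E)
    (hF : DifferentiableOn ℂ F (ball (0 : E) 1))
    (hFmaps : Set.MapsTo F (ball (0 : E) 1) (ball (0 : E) 1))
    (a : ℝ) (ha : ‖F 0‖ = a) :
    ∀ z ∈ ball (0 : E) 1, ‖F z‖ ≤ (‖z‖ + a) / (1 + a * ‖z‖) :=
  fun _ hz ↦ ha ▸ norm_le_div_of_mapsTo_ball hF hFmaps (mem_ball_zero_iff.mp hz)

/-- if `F` is a biholomorphic automorphism of the open unit ball `D` of a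
finite-dimensional complex normed space (ℂⁿ with a norm `h`) with `h(F(0)) = a`, then
`h(F(z)) ≤ (h(z) + a)/(1 + a·h(z))` for every `z ∈ D`. -/
theorem automorphism_schwarz_pick_bound
    {E : Type*} [NormedAddCommGroup E] [NormedSpace ℂ E] [FiniteDimensional ℂ E]
    (F G : E → E)
    (hF : DifferentiableOn ℂ F (ball (0 : E) 1))
    (hFmaps : Set.MapsTo F (ball (0 : E) 1) (ball (0 : E) 1))
    (hG : DifferentiableOn ℂ G (ball (0 : E) 1))
    (hGmaps : Set.MapsTo G (ball (0 : E) 1) (ball (0 : E) 1))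
    (hGF : ∀ z ∈ ball (0 : E) 1, G (F z) = z)
    (hFG : ∀ w ∈ ball (0 : E) 1, F (G w) = w)
    (a : ℝ) (ha : ‖F 0‖ = a) :
    ∀ z ∈ ball (0 : E) 1, ‖F z‖ ≤ (‖z‖ + a) / (1 + a * ‖z‖) :=
  automorphism_schwarz_pick_bound_general F hF hFmaps a ha
end

section
/- Let D ⊂ ℂⁿ be a bounded, balanced, convex domain with Minkowski functional h (a norm), and let F : D → D be an automorphism of D. For any s ∈ (h(F(0)), 1), one has ((s − h(F(0)))/(1 − s·h(F(0))))·D ⊆ F⁻¹(s·D). -/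
open Set Pointwise

/-- The Minkowski functional of a set `D`. -/
noncomputable def mink {E : Type*} [NormedAddCommGroup E] [NormedSpace ℂ E]
    (D : Set E) (z : E) : ℝ :=
  sInf {t : ℝ | 0 < t ∧ t⁻¹ • z ∈ D}

/-!
Suppose `F (r • w) ∉ s • D`. Separating `s⁻¹ • F (r • w)` from the convex open set `D` and using
that `D` is balanced gives a complex functional `L` with `‖L‖ < 1` on `D` and `‖L (F (r • w))‖ ≥ s`;
balancedness also gives `‖L z‖ ≤ h z`, so `‖L (F 0)‖ ≤ a := h (F 0)`. Restricted to a complex line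
through `w`, the map `L ∘ F` sends the unit disc into itself, so the Schwarz–Pick lemma bounds
`‖L (F (r • w))‖` by `(a + r) / (1 + a r) = s`, and strictly so because `D` is open.
-/

open Metric ComplexConjugate

namespace Complex

theorem normSq_one_sub_conj_mul_sub_normSq_sub (u w : ℂ) :
    normSq (1 - conj w * u) - normSq (u - w) = (1 - normSq u) * (1 - normSq w) := by
  simp only [normSq_apply, sub_re, sub_im, mul_re, mul_im, conj_re, conj_im, one_re, one_im]
  ring

theorem norm_sub_lt_norm_one_sub_conj_mul {u w : ℂ} (hu : ‖u‖ < 1) (hw : ‖w‖ < 1) :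
    ‖u - w‖ < ‖1 - conj w * u‖ := by
  have key := normSq_one_sub_conj_mul_sub_normSq_sub u w
  simp only [← Complex.sq_norm] at key
  have hpos : 0 < (1 - ‖u‖ ^ 2) * (1 - ‖w‖ ^ 2) :=
    mul_pos (sub_pos.2 (pow_lt_one₀ (norm_nonneg u) hu two_ne_zero))
      (sub_pos.2 (pow_lt_one₀ (norm_nonneg w) hw two_ne_zero))
  exact (pow_lt_pow_iff_left₀ (norm_nonneg _) (norm_nonneg _) two_ne_zero).1 (by linarith)

/-- The pseudo-hyperbolic distance `‖u - w‖ / ‖1 - conj w * u‖` controls how far `‖u‖` can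
exceed `‖w‖`. -/
theorem norm_mul_one_add_le_of_norm_sub_le {u w : ℂ} {t : ℝ} (hu : ‖u‖ < 1) (hw : ‖w‖ < 1)
    (ht₀ : 0 ≤ t) (ht₁ : t ≤ 1) (h : ‖u - w‖ ≤ t * ‖1 - conj w * u‖) :
    ‖u‖ * (1 + ‖w‖ * t) ≤ ‖w‖ + t := by
  have hre : (u * conj w).re ≤ ‖u‖ * ‖w‖ := by
    simpa using re_le_norm (u * conj w)
  have hnum : ‖u - w‖ ^ 2 = ‖u‖ ^ 2 + ‖w‖ ^ 2 - 2 * (u * conj w).re := by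
    simp only [Complex.sq_norm, normSq_sub]
  have hden : ‖1 - conj w * u‖ ^ 2 = 1 + ‖w‖ ^ 2 * ‖u‖ ^ 2 - 2 * (u * conj w).re := by
    have := normSq_one_sub_conj_mul_sub_normSq_sub u w
    simp only [← Complex.sq_norm] at this
    linear_combination this + hnum
  have hsq := pow_le_pow_left₀ (norm_nonneg _) h 2
  rw [mul_pow, hnum, hden] at hsq
  have hkey : (‖u‖ - ‖w‖) ^ 2 ≤ (t * (1 - ‖w‖ * ‖u‖)) ^ 2 := by
    nlinarith [mul_nonneg (sub_nonneg.2 hre) (sub_nonneg.2 (pow_le_one₀ ht₀ ht₁ (n := 2)))]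
  have hwu : ‖w‖ * ‖u‖ ≤ 1 := by nlinarith [norm_nonneg u, norm_nonneg w]
  linarith [(abs_le_of_sq_le_sq' hkey (mul_nonneg ht₀ (sub_nonneg.2 hwu))).2]

theorem norm_sub_le_mul_norm_one_sub_conj_mul_of_mapsTo_ball {g : ℂ → ℂ}
    (hd : DifferentiableOn ℂ g (ball 0 1)) (hm : MapsTo g (ball 0 1) (ball 0 1)) {ζ : ℂ}
    (hζ : ‖ζ‖ < 1) : ‖g ζ - g 0‖ ≤ ‖ζ‖ * ‖1 - conj (g 0) * g ζ‖ := by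
  have hg : ∀ η ∈ ball (0 : ℂ) 1, ‖g η‖ < 1 := fun η hη => mem_ball_zero_iff.1 (hm hη)
  have hlt : ∀ η ∈ ball (0 : ℂ) 1, ‖g η - g 0‖ < ‖1 - conj (g 0) * g η‖ := fun η hη =>
    norm_sub_lt_norm_one_sub_conj_mul (hg η hη) (hg 0 (mem_ball_self one_pos))
  have hden : ∀ η ∈ ball (0 : ℂ) 1, 0 < ‖1 - conj (g 0) * g η‖ := fun η hη =>
    (norm_nonneg _).trans_lt (hlt η hη)
  -- the Schwarz lemma, applied to `g` followed by the disc automorphism sending `g 0` to `0`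
  have hschwarz := norm_le_norm_of_mapsTo_ball
    (f := fun η => (g η - g 0) / (1 - conj (g 0) * g η))
    ((hd.sub_const _).div ((differentiableOn_const 1).sub (hd.const_mul _))
      fun η hη => norm_pos_iff.1 (hden η hη))
    (fun η hη => mem_closedBall_zero_iff.2 <| by
      rw [norm_div]; exact ((div_lt_one (hden η hη)).2 (hlt η hη)).le)
    (by simp) hζ
  rwa [norm_div, div_le_iff₀ (hden ζ (mem_ball_zero_iff.2 hζ))] at hschwarz

/-- The Schwarz–Pick lemma, as a bound on `‖g ζ‖`. -/
theorem norm_le_of_mapsTo_ball {g : ℂ → ℂ} (hd : DifferentiableOn ℂ g (ball 0 1))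
    (hm : MapsTo g (ball 0 1) (ball 0 1)) {ζ : ℂ} (hζ : ‖ζ‖ < 1) :
    ‖g ζ‖ ≤ (‖g 0‖ + ‖ζ‖) / (1 + ‖g 0‖ * ‖ζ‖) := by
  have hg : ∀ η ∈ ball (0 : ℂ) 1, ‖g η‖ < 1 := fun η hη => mem_ball_zero_iff.1 (hm hη)
  rw [le_div_iff₀ (by positivity)]
  exact norm_mul_one_add_le_of_norm_sub_le (hg ζ (mem_ball_zero_iff.2 hζ))
    (hg 0 (mem_ball_self one_pos)) (norm_nonneg ζ) hζ.le
    (norm_sub_le_mul_norm_one_sub_conj_mul_of_mapsTo_ball hd hm hζ)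

end Complex

theorem add_div_one_add_mul_lt_add_div_one_add_mul {a b r t : ℝ} (hb : 0 ≤ b) (hba : b ≤ a)
    (ha : a < 1) (ht : 0 ≤ t) (htr : t < r) (hr : r ≤ 1) :
    (b + t) / (1 + b * t) < (a + r) / (1 + a * r) := by
  rw [div_lt_div_iff₀ (by positivity) (by nlinarith)]
  nlinarith [mul_nonneg (sub_nonneg.2 hba) (sub_nonneg.2 (by nlinarith : r * t ≤ 1)),
    mul_pos (sub_pos.2 htr) (sub_pos.2 (by nlinarith : a * b < 1))]

theorem IsOpen.exists_one_lt_smul_mem {E : Type*} [TopologicalSpace E] [AddCommGroup E]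
    [Module ℝ E] [ContinuousSMul ℝ E] {U : Set E} (hU : IsOpen U) {x : E} (hx : x ∈ U) :
    ∃ τ : ℝ, 1 < τ ∧ τ • x ∈ U := by
  have hcont : Continuous fun τ : ℝ => τ • x := continuous_id.smul continuous_const
  exact ((hcont.tendsto' 1 x (one_smul ℝ x)).eventually (hU.mem_nhds hx)).exists_gt

section BalancedDomain

variable {E : Type*} [NormedAddCommGroup E] [NormedSpace ℂ E] {D : Set E}

theorem mink_nonneg (D : Set E) (z : E) : 0 ≤ mink D z :=
  Real.sInf_nonneg fun _ ht => ht.1.le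

theorem norm_apply_le_mink {L : StrongDual ℂ E} (hL : ∀ y ∈ D, ‖L y‖ < 1) {z : E}
    (hz : z ∈ D) : ‖L z‖ ≤ mink D z := by
  refine le_csInf ⟨1, one_pos, by simpa using hz⟩ fun t ⟨ht, htz⟩ => ?_
  have := hL _ htz
  rw [L.map_smul_of_tower, norm_smul, Real.norm_of_nonneg (inv_nonneg.2 ht.le),
    inv_mul_lt_iff₀ ht, mul_one] at this
  exact this.le

theorem Balanced.norm_lt_one_of_re_lt_one (hD : Balanced ℂ D) {L : StrongDual ℂ E}
    (hL : ∀ y ∈ D, (L y).re < 1) {y : E} (hy : y ∈ D) : ‖L y‖ < 1 := by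
  rcases eq_or_ne (L y) 0 with h | h
  · simp [h]
  · -- rotate `y` so that `L` takes the real value `‖L y‖` on it
    have hθ : ‖(‖L y‖ : ℂ) / L y‖ ≤ 1 := by simp [h]
    have := hL _ (hD.smul_mem hθ hy)
    rwa [map_smul, smul_eq_mul, div_mul_cancel₀ _ h, Complex.ofReal_re] at this

theorem Balanced.exists_norm_lt_one_le_norm_of_notMem_smul (hD : Balanced ℂ D)
    (hconv : Convex ℝ D) (hopen : IsOpen D) (h0 : (0 : E) ∈ D) {s : ℝ} (hs : 0 < s) {x : E}
    (hx : x ∉ s • D) : ∃ L : StrongDual ℂ E, (∀ y ∈ D, ‖L y‖ < 1) ∧ s ≤ ‖L x‖ := by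
  rw [mem_smul_set_iff_inv_smul_mem₀ hs.ne'] at hx
  obtain ⟨L, hLx, hLD⟩ := RCLike.separate_convex_open_set (𝕜 := ℂ) h0 hconv hopen hx
  simp only [RCLike.re_to_complex] at hLx hLD
  refine ⟨L, fun y hy => hD.norm_lt_one_of_re_lt_one hLD hy, ?_⟩
  rw [L.map_smul_of_tower, Complex.real_smul, Complex.re_ofReal_mul, inv_mul_eq_one₀ hs.ne'] at hLx
  exact hLx ▸ Complex.re_le_norm (L x)

theorem Balanced.norm_apply_smul_le (hD : Balanced ℂ D) {f : E → ℂ}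
    (hf : DifferentiableOn ℂ f D) (hfD : MapsTo f D (ball 0 1)) {w : E} (hw : w ∈ D) {ζ : ℂ}
    (hζ : ‖ζ‖ < 1) : ‖f (ζ • w)‖ ≤ (‖f 0‖ + ‖ζ‖) / (1 + ‖f 0‖ * ‖ζ‖) := by
  have hline : MapsTo (fun η : ℂ => η • w) (ball 0 1) D := fun η hη =>
    hD.smul_mem (mem_ball_zero_iff.1 hη).le hw
  simpa using Complex.norm_le_of_mapsTo_ball (g := fun η => f (η • w))
    (hf.comp (differentiable_id.smul_const w).differentiableOn hline) (hfD.comp hline) hζ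

end BalancedDomain

theorem balanced_domain_automorphism_contraction_general (n : ℕ)
    (D : Set (EuclideanSpace ℂ (Fin n)))
    (hopen : IsOpen D)
    (hconv : Convex ℝ D) (h0 : (0 : EuclideanSpace ℂ (Fin n)) ∈ D)
    (hbal : ∀ z ∈ D, ∀ l : ℂ, ‖l‖ ≤ 1 → l • z ∈ D)
    (F : EuclideanSpace ℂ (Fin n) → EuclideanSpace ℂ (Fin n))
    (hF : DifferentiableOn ℂ F D) (hFmaps : Set.MapsTo F D D)
    (s : ℝ) (hs1 : mink D (F 0) < s) (hs2 : s < 1) :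
    ((s - mink D (F 0)) / (1 - s * mink D (F 0))) • D ⊆ D ∩ F ⁻¹' (s • D) := by
  have hD : Balanced ℂ D := balanced_iff_smul_mem.2 fun l hl z hz => hbal z hz l hl
  set a := mink D (F 0)
  have ha : 0 ≤ a := mink_nonneg D (F 0)
  have hsa : s * a < 1 := by nlinarith
  set r := (s - a) / (1 - s * a) with hr
  have hr0 : 0 < r := div_pos (by linarith) (by linarith)
  have hr1 : r < 1 := by rw [hr, div_lt_one (by linarith)]; nlinarith
  have hsr : (a + r) / (1 + a * r) = s := by
    have hr' : r * (1 - s * a) = s - a := div_mul_cancel₀ _ (by linarith)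
    rw [div_eq_iff (by positivity)]
    linear_combination hr'
  rintro _ ⟨w, hw, rfl⟩
  refine ⟨hconv.smul_mem_of_zero_mem h0 hw ⟨hr0.le, hr1.le⟩, ?_⟩
  by_contra hout
  obtain ⟨L, hLD, hLs⟩ :=
    hD.exists_norm_lt_one_le_norm_of_notMem_smul hconv hopen h0 (ha.trans_lt hs1) hout
  have hLF0 : ‖L (F 0)‖ ≤ a := norm_apply_le_mink hLD (hFmaps h0)
  -- strictness: `r • w = (r / τ) • (τ • w)` with `τ • w ∈ D` and `r / τ < r`
  obtain ⟨τ, hτ, hτw⟩ := hopen.exists_one_lt_smul_mem hw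
  have ht : 0 < r / τ := by positivity
  have hSP := hD.norm_apply_smul_le (L.differentiable.comp_differentiableOn hF)
    (fun y hy => mem_ball_zero_iff.2 (hLD _ (hFmaps hy))) hτw (ζ := ((r / τ : ℝ) : ℂ))
    (by rw [Complex.norm_real, Real.norm_of_nonneg ht.le]; exact (div_lt_self hr0 hτ).trans hr1)
  rw [Complex.coe_smul, smul_smul, div_mul_cancel₀ _ (by positivity), Complex.norm_real,
    Real.norm_of_nonneg ht.le] at hSP
  exact (hLs.trans hSP).not_gt <| hsr ▸ add_div_one_add_mul_lt_add_div_one_add_mul (norm_nonneg _)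
    hLF0 (hs1.trans hs2) ht.le (div_lt_self hr0 hτ) hr1.le

/-- Proposition 2.7: for a bounded balanced convex domain `D ⊂ ℂⁿ` with
Minkowski functional `h`, and `F` an automorphism of `D`, for any `s ∈ (h(F(0)), 1)` one
has `((s − h(F 0))/(1 − s·h(F 0))) • D ⊆ F⁻¹(s • D)`. -/
theorem balanced_domain_automorphism_contraction (n : ℕ)
    (D : Set (EuclideanSpace ℂ (Fin n)))
    (hopen : IsOpen D) (hconn : IsConnected D) (hbdd : Bornology.IsBounded D)
    (hconv : Convex ℝ D) (h0 : (0 : EuclideanSpace ℂ (Fin n)) ∈ D)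
    (hbal : ∀ z ∈ D, ∀ l : ℂ, ‖l‖ ≤ 1 → l • z ∈ D)
    (F G : EuclideanSpace ℂ (Fin n) → EuclideanSpace ℂ (Fin n))
    (hF : DifferentiableOn ℂ F D) (hFmaps : Set.MapsTo F D D)
    (hG : DifferentiableOn ℂ G D) (hGmaps : Set.MapsTo G D D)
    (hGF : ∀ z ∈ D, G (F z) = z) (hFG : ∀ w ∈ D, F (G w) = w)
    (s : ℝ) (hs1 : mink D (F 0) < s) (hs2 : s < 1) :
    ((s - mink D (F 0)) / (1 - s * mink D (F 0))) • D ⊆ D ∩ F ⁻¹' (s • D) :=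
  balanced_domain_automorphism_contraction_general n D hopen hconv h0 hbal F hF hFmaps s hs1 hs2
end
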